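/- If (A_B, A_C, A_R) is a 1-tight odd cycle cut of a graph G, then G[A_B ∪ A_C] contains |A_C| vertex-disjoint odd cycles, each containing exactly one vertex of A_C. -/

import Mathlib

open SimpleGraph

/-- `S` is an odd cycle transversal of `G`: removing `S` leaves a bipartite graph. -/
def IsOCT {W : Type*} (G : SimpleGraph W) (S : Set W) : Prop :=
  (G.induce Sᶜ).Colorable 2

/-- The minimum size of an odd cycle transversal of `G`. -/
noncomputable def oct {W : Type*} (G : SimpleGraph W) : ℕ :=
  sInf {n | ∃ S : Set W, S.ncard = n ∧ IsOCT G S}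

/-- `(XB, XC, XR)` is an odd cycle cut of `G`. -/
def IsOCC {V : Type*} (G : SimpleGraph V) (XB XC XR : Set V) : Prop :=
  XB ∪ XC ∪ XR = Set.univ ∧ Disjoint XB XC ∧ Disjoint XB XR ∧ Disjoint XC XR ∧
  (G.induce XB).Colorable 2 ∧
  (∀ u ∈ XB, ∀ v ∈ XR, ¬ G.Adj u v) ∧
  (XB ∪ XC).Nonempty

/-- `H` is an `XC`-certificate of order `z` in `G`. -/
def IsCert {V : Type*} (G : SimpleGraph V) (H : G.Subgraph) (XC : Set V) (z : ℕ) : Prop :=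
  XC ⊆ H.verts ∧
  IsOCT H.coe {x : ↥H.verts | (x : V) ∈ XC} ∧
  (∀ S : Set ↥H.verts, IsOCT H.coe S → XC.ncard ≤ S.ncard) ∧
  ∀ v : ↥H.verts, {u : ↥H.verts | H.coe.Reachable u v ∧ (u : V) ∈ XC}.ncard ≤ z

/-- `(AB, AC, AR)` is a `z`-tight odd cycle cut of `G`: a tight OCC
(`|AC| = oct(G[AC ∪ AB])`) such that `G[AC ∪ AB]` contains an `AC`-certificate of
order `z`. -/
def IsZTightOCC {V : Type*} (G : SimpleGraph V) (AB AC AR : Set V) (z : ℕ) : Prop :=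
  IsOCC G AB AC AR ∧ AC.ncard = oct (G.induce (AC ∪ AB)) ∧
  ∃ H : G.Subgraph, H.verts ⊆ AC ∪ AB ∧ IsCert G H AC z



namespace OneTightAux

variable {V : Type*} {G : SimpleGraph V}

lemma length_eq_one_of_edge_of_nodup {w u : V} (q : G.Walk w u) (hnd : q.support.Nodup)
    (he : s(u, w) ∈ q.edges) : q.length = 1 := by
  cases q with
  | nil => simp at he
  | @cons _ x _ h' r =>
    rw [Walk.edges_cons, List.mem_cons] at he
    rw [Walk.support_cons, List.nodup_cons] at hnd
    rcases he with he | he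
    · rcases Sym2.eq_iff.mp he with ⟨h1, h2⟩ | ⟨h1, h2⟩
      · exact absurd h2 h'.ne
      · subst h1
        have hr : r.length = 0 := by
          cases r with
          | nil => rfl
          | @cons _ y _ h'' r' =>
            exfalso
            have hu : u ∈ r'.support := Walk.end_mem_support _
            rw [Walk.support_cons, List.nodup_cons] at hnd
            exact hnd.2.1 hu
        simp [hr]
    · exact absurd (r.snd_mem_support_of_mem_edges he) hnd.1

lemma parity_along_walk (f : V → Bool) {u v : V} (p : G.Walk u v)
    (hd : ∀ d ∈ p.darts, f d.toProd.1 ≠ f d.toProd.2) :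
    Even p.length ↔ (f u ↔ f v) := by
  induction p with
  | nil => simp
  | @cons a b c h q ih =>
    rw [Walk.darts_cons] at hd
    have h1 : f a ≠ f b := hd ⟨(a, b), h⟩ List.mem_cons_self
    have h2 := ih (fun d hdm => hd d (List.mem_cons_of_mem _ hdm))
    have h1' : ¬ f a = true ↔ f b = true := by
      rw [← not_iff, ← Bool.eq_iff_iff]; exact h1
    simp only [Walk.length_cons, Nat.even_add_one, h2]
    tauto

lemma exists_odd_cycle_aux :
    ∀ n : ℕ, ∀ {u : V} (p : G.Walk u u), p.length = n → Odd n →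
      ∃ (x : V) (c : G.Walk x x), c.IsCycle ∧ Odd c.length ∧ ∀ y ∈ c.support, y ∈ p.support := by
  intro n
  induction n using Nat.strong_induction_on with
  | _ n ih =>
    intro u p hl hodd
    classical
    cases p with
    | nil => rw [← hl] at hodd; simp at hodd
    | @cons _ w _ h q =>
      rw [Walk.length_cons] at hl
      by_cases hnd : q.support.Nodup
      · -- the walk itself is a cycle
        refine ⟨u, Walk.cons h q, ?_, ?_, fun y hy => hy⟩
        · rw [Walk.cons_isCycle_iff]
          refine ⟨Walk.IsPath.mk' hnd, fun he => ?_⟩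
          have h1 := length_eq_one_of_edge_of_nodup q hnd he
          rw [← hl, h1] at hodd
          exact absurd hodd (by decide)
        · rw [Walk.length_cons, hl]; exact hodd
      · -- there is a repeated vertex; rotate and split
        rw [List.nodup_iff_count_le_one] at hnd
        push_neg at hnd
        obtain ⟨x, hx2⟩ := hnd
        have hxq : x ∈ q.support := by
          rw [← List.count_pos_iff]; omega
        have hxp : x ∈ (Walk.cons h q).support := by
          rw [Walk.support_cons]; exact List.mem_cons_of_mem _ hxq
        set pr := (Walk.cons h q).rotate x hxp with hpr
        have hprl : pr.length = n := by
          have := ((Walk.cons h q).rotate_darts x hxp).perm.length_eq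
          rw [Walk.length_darts, Walk.length_darts] at this
          rw [this, Walk.length_cons]
          omega
        have hprsub : ∀ y ∈ pr.support, y ∈ (Walk.cons h q).support := by
          intro y hy
          rw [Walk.support_eq_cons pr, List.mem_cons] at hy
          rcases hy with rfl | hy
          · exact hxp
          · have := (Walk.support_rotate (Walk.cons h q) x hxp).perm.mem_iff.mp hy
            rw [Walk.support_eq_cons (Walk.cons h q)]
            exact List.mem_cons_of_mem _ this
        have hcnt : 1 < List.count x pr.support.tail := by
          have hperm := (Walk.support_rotate (Walk.cons h q) x hxp).perm
          rw [Walk.support_cons, List.tail_cons] at hperm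
          rw [hperm.count_eq]; exact hx2
        cases hpc : pr with
        | nil =>
          rw [hpc] at hprl; simp at hprl
          rw [Nat.odd_iff] at hodd; omega
        | @cons _ w2 _ h2 q2 =>
          rw [hpc] at hcnt hprl hprsub
          rw [Walk.support_cons] at hcnt
          simp only [List.tail_cons] at hcnt
          have hxq2 : x ∈ q2.support := by
            rw [← List.count_pos_iff]; omega
          set t := q2.takeUntil x hxq2 with ht
          set d := q2.dropUntil x hxq2 with hd
          have hspec : t.append d = q2 := q2.take_spec hxq2
          have hlen : t.length + d.length = q2.length := by
            have := congrArg Walk.length hspec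
            rwa [Walk.length_append] at this
          have hq2l : q2.length + 1 = n := by
            rw [Walk.length_cons] at hprl; omega
          have hdpos : 0 < d.length := by
            by_contra hd0
            push_neg at hd0
            have hdnil : d.support.tail = [] := by
              have hls : d.support.length = d.length + 1 := Walk.length_support d
              rw [Walk.support_eq_cons d, List.length_cons] at hls
              have : d.support.tail.length = 0 := by omega
              exact List.length_eq_zero_iff.mp this
            have hcnt1 : q2.support.count x = 1 := by
              have h1 : (t.append d).support = t.support ++ d.support.tail :=
                Walk.support_append t d
              rw [← hspec, h1, hdnil, List.append_nil]
              exact q2.count_support_takeUntil_eq_one hxq2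
            omega
          -- two shorter closed walks
          have hsum : (Walk.cons h2 t).length + d.length = n := by
            rw [Walk.length_cons]; omega
          have hone_odd : Odd (Walk.cons h2 t).length ∨ Odd d.length := by
            rcases Nat.even_or_odd (Walk.cons h2 t).length with he | ho
            · right
              rw [Nat.even_iff] at he
              rw [Nat.odd_iff] at hodd ⊢
              omega
            · left; exact ho
          have hts : ∀ y ∈ (Walk.cons h2 t).support, y ∈ (Walk.cons h q).support := by
            intro y hy
            rw [Walk.support_cons, List.mem_cons] at hy
            rcases hy with rfl | hy
            · exact hxp
            · exact hprsub _ (by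
                rw [Walk.support_cons]
                exact List.mem_cons_of_mem _ ((q2.support_takeUntil_subset hxq2) hy))
          have hds : ∀ y ∈ d.support, y ∈ (Walk.cons h q).support := by
            intro y hy
            exact hprsub _ (by
              rw [Walk.support_cons]
              exact List.mem_cons_of_mem _ ((q2.support_dropUntil_subset hxq2) hy))
          rcases hone_odd with ho | ho
          · obtain ⟨z, c, hc1, hc2, hc3⟩ := ih (Walk.cons h2 t).length
              (by rw [Walk.length_cons]; omega) (Walk.cons h2 t) rfl ho
            exact ⟨z, c, hc1, hc2, fun y hy => hts _ (hc3 y hy)⟩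
          · obtain ⟨z, c, hc1, hc2, hc3⟩ := ih d.length (by omega) d rfl ho
            exact ⟨z, c, hc1, hc2, fun y hy => hds _ (hc3 y hy)⟩

lemma colorable_of_no_odd_closed_walk
    (h : ∀ (u : V) (p : G.Walk u u), ¬ Odd p.length) : G.Colorable 2 := by
  classical
  have hreach : ∀ v : V, G.Reachable (G.connectedComponentMk v).out v := by
    intro v
    have := Quot.out_eq (G.connectedComponentMk v)
    exact ConnectedComponent.exact this
  have hvalid : ∀ {u v : V}, G.Adj u v →
      decide (Odd (G.dist (G.connectedComponentMk u).out u)) ≠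
      decide (Odd (G.dist (G.connectedComponentMk v).out v)) := by
    intro u v hadj heq
    have hcc : G.connectedComponentMk u = G.connectedComponentMk v :=
      ConnectedComponent.sound hadj.reachable
    set r := (G.connectedComponentMk u).out with hr
    have hru : G.Reachable r u := hreach u
    have hrv : G.Reachable r v := by
      rw [hr, hcc]; exact hreach v
    obtain ⟨p, hp⟩ := hru.exists_walk_length_eq_dist
    obtain ⟨q, hq⟩ := hrv.exists_walk_length_eq_dist
    have hpar : Odd (G.dist r u) ↔ Odd (G.dist r v) := by
      rw [hr] at heq ⊢
      rw [hcc] at heq ⊢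
      constructor <;> intro hh <;> simp_all
    apply h r (p.append (Walk.cons hadj q.reverse))
    rw [Walk.length_append, Walk.length_cons, Walk.length_reverse, hp, hq]
    rcases Nat.even_or_odd (G.dist r u) with he | ho
    · have : ¬ Odd (G.dist r v) := fun hh => (Nat.not_odd_iff_even.mpr he) (hpar.mpr hh)
      rw [Nat.not_odd_iff_even] at this
      rw [Nat.even_iff] at he this
      rw [Nat.odd_iff]; omega
    · have := hpar.mp ho
      rw [Nat.odd_iff] at ho this ⊢; omega
  have c : G.Coloring Bool :=
    Coloring.mk (fun v => decide (Odd (G.dist (G.connectedComponentMk v).out v)))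
      (fun hadj => hvalid hadj)
  have := c.colorable
  simpa using this

lemma exists_odd_cycle_of_not_colorable (h : ¬ G.Colorable 2) :
    ∃ (x : V) (c : G.Walk x x), c.IsCycle ∧ Odd c.length := by
  by_contra hno
  push_neg at hno
  apply h
  apply colorable_of_no_odd_closed_walk
  intro u p hodd
  obtain ⟨x, c, hc1, hc2, _⟩ := exists_odd_cycle_aux p.length p rfl hodd
  exact hno x c hc1 hc2

end OneTightAux


/-- If `(AB, AC, AR)` is a `1`-tight odd cycle cut of `G`, then `G[AB ∪ AC]` contains
`|AC|` vertex-disjoint odd cycles (one through each vertex of `AC`), each containing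
exactly one vertex of `AC`. -/
theorem one_tight_occ_disjoint_odd_cycles {V : Type} [Fintype V] (G : SimpleGraph V)
    (AB AC AR : Set V) (h : IsZTightOCC G AB AC AR 1) :
    ∃ W : (a : ↥AC) → G.Walk (a : V) (a : V),
      (∀ a : ↥AC, (W a).IsCycle ∧ Odd (W a).length ∧
        (∀ x ∈ (W a).support, x ∈ AB ∪ AC) ∧
        (∀ x ∈ (W a).support, x ∈ AC → x = (a : V))) ∧
      ∀ a b : ↥AC, a ≠ b → ∀ x ∈ (W a).support, x ∉ (W b).support := by
  
  classical
  obtain ⟨hocc, hoct, H, hHsub, hACsub, hOCTC, hmin, hz⟩ := h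
  set S0 : Set ↥H.verts := {x : ↥H.verts | (x : V) ∈ AC} with hS0
  have hS0card : S0.ncard = AC.ncard := by
    have himg : Subtype.val '' S0 = AC := by
      ext y
      constructor
      · rintro ⟨z, hzS, rfl⟩; exact hzS
      · intro hy; exact ⟨⟨y, hACsub hy⟩, hy, rfl⟩
    rw [← himg, Set.ncard_image_of_injective _ Subtype.val_injective]
  have key : ∀ a : ↥AC, ∃ Wa : G.Walk (a : V) (a : V),
      Wa.IsCycle ∧ Odd Wa.length ∧
      (∀ x ∈ Wa.support, x ∈ AB ∪ AC) ∧
      (∀ x ∈ Wa.support, x ∈ AC → x = (a : V)) ∧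
      (∀ x ∈ Wa.support, ∃ hx : x ∈ H.verts,
        H.coe.Reachable ⟨(a : V), hACsub a.2⟩ ⟨x, hx⟩) := by
    intro a
    set aH : ↥H.verts := ⟨(a : V), hACsub a.2⟩ with haH
    have haHS0 : aH ∈ S0 := a.2
    set Sa : Set ↥H.verts := S0 \ {aH} with hSa
    have hnotoct : ¬ IsOCT H.coe Sa := by
      intro hoc
      have h1 := hmin Sa hoc
      have h2 : Sa.ncard = S0.ncard - 1 :=
        Set.ncard_diff_singleton_of_mem haHS0
      have h3 : 0 < S0.ncard := (Set.ncard_pos (Set.toFinite _)).mpr ⟨aH, haHS0⟩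
      omega
    have hnotcol : ¬ (H.coe.induce Saᶜ).Colorable 2 := hnotoct
    obtain ⟨x, c, hcyc, hodd⟩ := OneTightAux.exists_odd_cycle_of_not_colorable hnotcol
    let emb : (H.coe.induce Saᶜ) ↪g H.coe := SimpleGraph.Embedding.induce Saᶜ
    set c1 : H.coe.Walk (x : ↥H.verts) (x : ↥H.verts) := c.map emb.toHom with hc1
    have hcyc1 : c1.IsCycle :=
      (Walk.map_isCycle_iff_of_injective emb.injective).mpr hcyc
    have hodd1 : Odd c1.length := by have := Walk.length_map emb.toHom c; rw [← this] at hodd; exact hodd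
    have hsup1 : ∀ y ∈ c1.support, ((y : V) ∈ AC → y = aH) := by
      intro y hy hyAC
      replace hy : y ∈ (c.map emb.toHom).support := hy
      rw [Walk.support_map, List.mem_map] at hy
      obtain ⟨z, hz, rfl⟩ := hy
      have hz2 : (z : ↥H.verts) ∈ Saᶜ := z.2
      by_contra hne
      exact hz2 ⟨hyAC, hne⟩
    -- aH lies on the cycle
    have hmem : aH ∈ c1.support := by
      by_contra haH'
      have hOCTC' : (H.coe.induce S0ᶜ).Colorable 2 := hOCTC
      obtain ⟨k0⟩ := hOCTC'
      let kb : (H.coe.induce S0ᶜ).Coloring Bool :=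
        (H.coe.induce S0ᶜ).recolorOfEquiv finTwoEquiv k0
      have hall : ∀ y ∈ c1.support, y ∈ S0ᶜ := by
        intro y hy hyS0
        exact haH' (hsup1 y hy hyS0 ▸ hy)
      set f : ↥H.verts → Bool :=
        fun y => if hy : y ∈ S0ᶜ then kb ⟨y, hy⟩ else true with hf
      have hdarts : ∀ d ∈ c1.darts, f d.toProd.1 ≠ f d.toProd.2 := by
        intro d hd
        have hm1 := hall _ (Walk.dart_fst_mem_support_of_mem_darts _ hd)
        have hm2 := hall _ (Walk.dart_snd_mem_support_of_mem_darts _ hd)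
        have hadj : (H.coe.induce S0ᶜ).Adj ⟨d.toProd.1, hm1⟩ ⟨d.toProd.2, hm2⟩ := d.adj
        have := kb.valid hadj
        simp only [hf, hm1, hm2, dif_pos]
        exact this
      have := OneTightAux.parity_along_walk f c1 hdarts
      rw [← Nat.not_odd_iff_even] at this
      exact (this.mpr Iff.rfl) hodd1
    -- rotate the cycle to start at aH
    set c2 : H.coe.Walk aH aH := c1.rotate aH hmem with hc2
    have hcyc2 : c2.IsCycle := hcyc1.rotate hmem
    have hodd2 : Odd c2.length := by
      have := (c1.rotate_darts aH hmem).perm.length_eq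
      rw [Walk.length_darts, Walk.length_darts] at this
      rwa [hc2, this]
    have hsub2 : ∀ y ∈ c2.support, y ∈ c1.support := by
      intro y hy
      rw [Walk.support_eq_cons c2, List.mem_cons] at hy
      rcases hy with rfl | hy
      · exact hmem
      · have := (Walk.support_rotate c1 aH hmem).perm.mem_iff.mp hy
        rw [Walk.support_eq_cons c1]
        exact List.mem_cons_of_mem _ this
    -- map to G
    refine ⟨c2.map H.hom, (Walk.map_isCycle_iff_of_injective Subgraph.hom_injective).mpr hcyc2,
      by have := Walk.length_map H.hom c2; rw [← this] at hodd2; exact hodd2, ?_, ?_, ?_⟩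
    · intro y hy
      replace hy : y ∈ (c2.map H.hom).support := hy
      rw [Walk.support_map, List.mem_map] at hy
      obtain ⟨z, hz, rfl⟩ := hy
      have := hHsub z.2
      rw [Set.union_comm] at this
      exact this
    · intro y hy hyAC
      replace hy : y ∈ (c2.map H.hom).support := hy
      rw [Walk.support_map, List.mem_map] at hy
      obtain ⟨z, hz, rfl⟩ := hy
      have := hsup1 z (hsub2 z hz) hyAC
      rw [this]
      rfl
    · intro y hy
      replace hy : y ∈ (c2.map H.hom).support := hy
      rw [Walk.support_map, List.mem_map] at hy
      obtain ⟨z, hz, rfl⟩ := hy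
      exact ⟨z.2, ⟨c2.takeUntil z hz⟩⟩
  choose W hW using key
  refine ⟨W, fun a => ⟨(hW a).1, (hW a).2.1, (hW a).2.2.1, (hW a).2.2.2.1⟩, ?_⟩
  intro a b hab y hya hyb
  obtain ⟨hyH, hra⟩ := (hW a).2.2.2.2 y hya
  obtain ⟨hyH', hrb⟩ := (hW b).2.2.2.2 y hyb
  set z : ↥H.verts := ⟨y, hyH⟩ with hzdef
  have hz1 := hz z
  have haz : (⟨(a : V), hACsub a.2⟩ : ↥H.verts) ∈
      {u : ↥H.verts | H.coe.Reachable u z ∧ (u : V) ∈ AC} := ⟨hra, a.2⟩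
  have hbz : (⟨(b : V), hACsub b.2⟩ : ↥H.verts) ∈
      {u : ↥H.verts | H.coe.Reachable u z ∧ (u : V) ∈ AC} := ⟨hrb, b.2⟩
  have hne : (⟨(a : V), hACsub a.2⟩ : ↥H.verts) ≠ ⟨(b : V), hACsub b.2⟩ := by
    intro he
    have hv : (a : V) = (b : V) := congrArg (Subtype.val : ↥H.verts → V) he
    exact hab (Subtype.ext hv)
  have h2le : 2 ≤ {u : ↥H.verts | H.coe.Reachable u z ∧ (u : V) ∈ AC}.ncard := by
    calc 2 = ({⟨(a : V), hACsub a.2⟩, ⟨(b : V), hACsub b.2⟩} : Set ↥H.verts).ncard :=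
          (Set.ncard_pair hne).symm
      _ ≤ _ := Set.ncard_le_ncard (by
          intro u hu
          rcases hu with rfl | rfl
          · exact haz
          · exact hbz) (Set.toFinite _)
  omega
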